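/- Suppose F_s(x,s)·s ≥ 0 for a.e. x ∈ ℝ^N and all s ∈ ℝ, λ ≤ 0 and ω < m. If v ∈ H¹(ℝ^{N+1}_+) is a weak solution of the extension system −Δv + m²v = 0 in ℝ^{N+1}_+ with boundary condition −∂v/∂x_{N+1} = ωv + λ(W∗v²)v − F_s(x,v) on ℝ^N×{0}, where W ≥ 0, then v ≡ 0. -/

import Mathlib

/-! Testing the weak formulation with `v` itself gives
`‖Dv‖₂² + m²‖v‖₂² = ∫ (ωv + λ(W∗v²)v − F_s(x,v)) v ≤ ω |v(·,0)|₂²`, since `λ(W∗v²)v² ≤ 0` and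
`F_s(x,v)v ≥ 0`. On each vertical line, `v(x,0)² = -∫₀^∞ ∂ₜ(v²) dt ≤ ∫₀^∞ (m v² + m⁻¹ (∂ₜv)²) dt`,
and integrating in `x` gives the trace inequality `m |v(·,0)|₂² ≤ ‖Dv‖₂² + m²‖v‖₂²`. As `ω < m`,
the trace vanishes, hence so does the energy. -/

open MeasureTheory Filter

noncomputable def emb (N : ℕ) (x : EuclideanSpace ℝ (Fin N)) : EuclideanSpace ℝ (Fin (N+1)) :=
  (EuclideanSpace.equiv (Fin (N+1)) ℝ).symm (fun i => if h : (i : ℕ) < N then x ⟨i, h⟩ else 0)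

/-- The open upper half space `ℝ^N × (0,∞)`. -/
def upper (N : ℕ) : Set (EuclideanSpace ℝ (Fin (N+1))) := {X | 0 < X (Fin.last N)}

/-- Standard basis vector. -/
noncomputable def eb (N : ℕ) (i : Fin (N+1)) : EuclideanSpace ℝ (Fin (N+1)) :=
  EuclideanSpace.single i 1

/-- Membership in `H¹(ℝ^{N+1}_+)` (pointwise-defined representative). -/
def H1 (N : ℕ) (v : EuclideanSpace ℝ (Fin (N+1)) → ℝ) : Prop :=
  Differentiable ℝ v ∧ MemLp v 2 (volume.restrict (upper N)) ∧
    MemLp (fun X => ‖fderiv ℝ v X‖) 2 (volume.restrict (upper N))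

/-- Weak solution of the extension system `−Δv + m²v = 0` in `ℝ^{N+1}_+` with
boundary condition `−∂v/∂x_{N+1} = ωv + λ(W∗v²)v − F_s(x,v)` on `ℝ^N × {0}`:
tested against every `w ∈ H¹(ℝ^{N+1}_+)`. -/
def IsWeakSolution (N : ℕ) (m ω lam : ℝ)
    (W : EuclideanSpace ℝ (Fin N) → ℝ) (Fs : EuclideanSpace ℝ (Fin N) → ℝ → ℝ)
    (v : EuclideanSpace ℝ (Fin (N+1)) → ℝ) : Prop :=
  ∀ w : EuclideanSpace ℝ (Fin (N+1)) → ℝ, H1 N w →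
    (∫ X in upper N,
        ((inner ℝ (gradient v X) (gradient w X) : ℝ) + m^2 * v X * w X)) =
      ∫ x : EuclideanSpace ℝ (Fin N),
        (ω * v (emb N x)
          + lam * (∫ y : EuclideanSpace ℝ (Fin N), W (x - y) * (v (emb N y))^2) * v (emb N x)
          - Fs x (v (emb N x))) * w (emb N x)

open Set

lemma abs_two_mul_le_add_mul_sq {m : ℝ} (hm : 0 < m) (a b : ℝ) :
    |2 * a * b| ≤ m * a ^ 2 + m⁻¹ * b ^ 2 := by
  have h := two_mul_le_add_mul_sq (a := -a) (b := b) hm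
  rw [neg_sq] at h
  exact abs_le.mpr ⟨by linarith, two_mul_le_add_mul_sq hm⟩

section HalfLine

variable {u u' : ℝ → ℝ} {a : ℝ}

lemma sq_eq_neg_two_mul_integral_Ioi (hu : ∀ t ∈ Ici a, HasDerivAt u (u' t) t)
    (hu2 : IntegrableOn (fun t => u t ^ 2) (Ioi a))
    (huu' : IntegrableOn (fun t => u t * u' t) (Ioi a)) :
    u a ^ 2 = -2 * ∫ t in Ioi a, u t * u' t := by
  have hsq : ∀ t ∈ Ici a, HasDerivAt (fun t => u t ^ 2) (2 * (u t * u' t)) t := fun t ht => by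
    simpa [mul_comm, mul_left_comm, mul_assoc] using (hu t ht).fun_pow 2
  have hlim := tendsto_zero_of_hasDerivAt_of_integrableOn_Ioi
    (fun t ht => hsq t (Ioi_subset_Ici_self ht)) (huu'.const_mul 2) hu2
  have := integral_Ioi_of_hasDerivAt_of_tendsto' hsq (huu'.const_mul 2) hlim
  rw [integral_const_mul] at this
  linarith

lemma sq_le_integral_Ioi {m : ℝ} (hm : 0 < m) (hu : ∀ t ∈ Ici a, HasDerivAt u (u' t) t)
    (hu2 : IntegrableOn (fun t => u t ^ 2) (Ioi a))
    (hu'2 : IntegrableOn (fun t => u' t ^ 2) (Ioi a)) :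
    u a ^ 2 ≤ ∫ t in Ioi a, (m * u t ^ 2 + m⁻¹ * u' t ^ 2) := by
  have hbound : IntegrableOn (fun t => m * u t ^ 2 + m⁻¹ * u' t ^ 2) (Ioi a) :=
    (hu2.const_mul m).add (hu'2.const_mul m⁻¹)
  have hu'_meas : AEStronglyMeasurable u' (volume.restrict (Ioi a)) :=
    (measurable_deriv u).aestronglyMeasurable.congr <|
      ae_restrict_of_forall_mem measurableSet_Ioi fun t ht => (hu t (Ioi_subset_Ici_self ht)).deriv
  have hu_meas : AEStronglyMeasurable u (volume.restrict (Ioi a)) :=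
    (continuousOn_of_forall_continuousAt fun t (ht : a < t) =>
      (hu t ht.le).continuousAt).aestronglyMeasurable measurableSet_Ioi
  have huu' : IntegrableOn (fun t => u t * u' t) (Ioi a) := by
    refine hbound.mono' (hu_meas.mul hu'_meas) (Eventually.of_forall fun t => ?_)
    have := abs_two_mul_le_add_mul_sq hm (u t) (u' t)
    rw [mul_assoc, abs_mul, abs_two] at this
    rw [Real.norm_eq_abs]
    linarith [abs_nonneg (u t * u' t)]
  rw [sq_eq_neg_two_mul_integral_Ioi hu hu2 huu', ← integral_const_mul]
  refine integral_mono (huu'.const_mul _) hbound fun t => ?_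
  have := abs_two_mul_le_add_mul_sq hm (u t) (u' t)
  linarith [neg_abs_le (2 * u t * u' t)]

end HalfLine

section Coordinates

variable (N : ℕ)

noncomputable def lastCoordEquiv :
    EuclideanSpace ℝ (Fin (N+1)) ≃ᵐ EuclideanSpace ℝ (Fin N) × ℝ :=
  (MeasurableEquiv.toLp 2 (Fin (N+1) → ℝ)).symm.trans <|
    (MeasurableEquiv.piFinSuccAbove (fun _ : Fin (N+1) => ℝ) (Fin.last N)).trans <|
      MeasurableEquiv.prodComm.trans <|
        (MeasurableEquiv.toLp 2 (Fin N → ℝ)).prodCongr (MeasurableEquiv.refl ℝ)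

lemma lastCoordEquiv_apply_snd (X : EuclideanSpace ℝ (Fin (N+1))) :
    (lastCoordEquiv N X).2 = X (Fin.last N) := by
  simp [lastCoordEquiv, MeasurableEquiv.trans_apply, MeasurableEquiv.prodCongr,
    MeasurableEquiv.prodComm, MeasurableEquiv.piFinSuccAbove]

lemma lastCoordEquiv_symm_apply (x : EuclideanSpace ℝ (Fin N)) (t : ℝ) :
    (lastCoordEquiv N).symm (x, t) = emb N x + t • eb N (Fin.last N) := by
  have h : (lastCoordEquiv N).symm (x, t) = WithLp.toLp 2 (Fin.snoc (fun i => x i) t) := by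
    simp [lastCoordEquiv, MeasurableEquiv.trans_apply, MeasurableEquiv.prodCongr,
      MeasurableEquiv.prodComm, MeasurableEquiv.piFinSuccAbove, Fin.insertNthEquiv]
  rw [h]
  ext j
  induction j using Fin.lastCases with
  | last => simp [emb, eb]
  | cast i =>
    simp [emb, eb, i.isLt, (Fin.castSucc_lt_last i).ne]

lemma emb_eq_lastCoordEquiv_symm (x : EuclideanSpace ℝ (Fin N)) :
    emb N x = (lastCoordEquiv N).symm (x, 0) := by
  simp [lastCoordEquiv_symm_apply]

lemma measurePreserving_lastCoordEquiv :
    MeasurePreserving (lastCoordEquiv N) volume (volume.prod volume) := by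
  have h_toLp := EuclideanSpace.volume_preserving_symm_measurableEquiv_toLp (Fin (N+1))
  have h_split := volume_preserving_piFinSuccAbove (fun _ : Fin (N+1) => ℝ) (Fin.last N)
  have h_swap : MeasurePreserving (Prod.swap : ℝ × (Fin N → ℝ) → _) volume volume :=
    Measure.measurePreserving_swap
  have h_ofLp := (EuclideanSpace.volume_preserving_symm_measurableEquiv_toLp (Fin N)).symm.prod
    (MeasurePreserving.id (volume : Measure ℝ))
  exact ((h_ofLp.comp h_swap).comp h_split).comp h_toLp

lemma lastCoordEquiv_preimage_upper :
    (lastCoordEquiv N).symm ⁻¹' upper N = univ ×ˢ Ioi 0 := by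
  ext ⟨x, t⟩
  simp [upper, ← lastCoordEquiv_apply_snd]

lemma measurableSet_upper : MeasurableSet (upper N) :=
  measurableSet_lt measurable_const (by fun_prop)

lemma measurePreserving_lastCoordEquiv_symm_upper :
    MeasurePreserving (lastCoordEquiv N).symm (volume.prod (volume.restrict (Ioi 0)))
      (volume.restrict (upper N)) := by
  have h := ((measurePreserving_lastCoordEquiv N).symm _).restrict_preimage (measurableSet_upper N)
  rwa [lastCoordEquiv_preimage_upper, ← Measure.prod_restrict, Measure.restrict_univ] at h

end Coordinates

section Trace

variable {N : ℕ} {v : EuclideanSpace ℝ (Fin (N+1)) → ℝ}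

variable (N v) in
noncomputable def normalDeriv (X : EuclideanSpace ℝ (Fin (N+1))) : ℝ :=
  fderiv ℝ v X (eb N (Fin.last N))

lemma measurable_normalDeriv : Measurable (normalDeriv N v) :=
  measurable_fderiv_apply_const ℝ v _

lemma sq_normalDeriv_le (X : EuclideanSpace ℝ (Fin (N+1))) :
    normalDeriv N v X ^ 2 ≤ ‖fderiv ℝ v X‖ ^ 2 := by
  have h := (fderiv ℝ v X).le_opNorm (eb N (Fin.last N))
  rw [eb, PiLp.norm_single, norm_one, mul_one, Real.norm_eq_abs] at h
  exact sq_le_sq' (neg_le_of_abs_le h) (le_of_abs_le h)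

lemma hasDerivAt_lastCoordEquiv_symm (hv : Differentiable ℝ v)
    (x : EuclideanSpace ℝ (Fin N)) (t : ℝ) :
    HasDerivAt (fun s => v ((lastCoordEquiv N).symm (x, s)))
      (normalDeriv N v ((lastCoordEquiv N).symm (x, t))) t := by
  simp only [lastCoordEquiv_symm_apply]
  have hline : HasDerivAt (fun s : ℝ => emb N x + s • eb N (Fin.last N)) (eb N (Fin.last N)) t := by
    simpa using ((hasDerivAt_id t).smul_const (eb N (Fin.last N))).const_add (emb N x)
  exact (hv _).hasFDerivAt.comp_hasDerivAt t hline

lemma trace_sq_le_integral_slice {m : ℝ} (hm : 0 < m) (hv : Differentiable ℝ v)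
    (hv2 : IntegrableOn (fun X => v X ^ 2) (upper N))
    (hd2 : IntegrableOn (fun X => normalDeriv N v X ^ 2) (upper N)) :
    ∀ᵐ x, v (emb N x) ^ 2 ≤ ∫ t in Ioi 0,
      (m * v ((lastCoordEquiv N).symm (x, t)) ^ 2
        + m⁻¹ * normalDeriv N v ((lastCoordEquiv N).symm (x, t)) ^ 2) := by
  have hmp := measurePreserving_lastCoordEquiv_symm_upper N
  have hv2' := (hmp.integrable_comp hv2.aestronglyMeasurable).mpr hv2
  have hd2' := (hmp.integrable_comp hd2.aestronglyMeasurable).mpr hd2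
  filter_upwards [hv2'.prod_right_ae, hd2'.prod_right_ae] with x hvx hdx
  rw [emb_eq_lastCoordEquiv_symm]
  exact sq_le_integral_Ioi hm (fun t _ => hasDerivAt_lastCoordEquiv_symm hv x t) hvx hdx

theorem integral_trace_sq_le {m : ℝ} (hm : 0 < m) (hv : Differentiable ℝ v)
    (hv2 : IntegrableOn (fun X => v X ^ 2) (upper N))
    (hd2 : IntegrableOn (fun X => normalDeriv N v X ^ 2) (upper N)) :
    Integrable (fun x => v (emb N x) ^ 2) ∧
      ∫ x, v (emb N x) ^ 2 ≤ ∫ X in upper N, (m * v X ^ 2 + m⁻¹ * normalDeriv N v X ^ 2) := by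
  set g := fun X => m * v X ^ 2 + m⁻¹ * normalDeriv N v X ^ 2
  have hg : IntegrableOn g (upper N) := (hv2.const_mul m).add (hd2.const_mul m⁻¹)
  have hmp := measurePreserving_lastCoordEquiv_symm_upper N
  have hg' := (hmp.integrable_comp hg.aestronglyMeasurable).mpr hg
  have hslice := trace_sq_le_integral_slice hm hv hv2 hd2
  have htrace_meas : AEStronglyMeasurable (fun x => v (emb N x) ^ 2) := by
    simp_rw [emb_eq_lastCoordEquiv_symm]
    exact ((hv.continuous.measurable.comp ((lastCoordEquiv N).symm.measurable.comp
      (measurable_id.prodMk measurable_const))).pow_const 2).aestronglyMeasurable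
  have htrace : Integrable (fun x => v (emb N x) ^ 2) := by
    refine hg'.integral_prod_left.mono' htrace_meas ?_
    filter_upwards [hslice] with x hx
    rwa [Real.norm_eq_abs, abs_sq]
  refine ⟨htrace, (integral_mono_ae htrace hg'.integral_prod_left hslice).trans_eq ?_⟩
  rw [← integral_prod _ hg']
  exact hmp.integral_comp (lastCoordEquiv N).symm.measurableEmbedding g

end Trace

lemma boundary_integrand_le {ω lam c F s : ℝ} (hlam : lam ≤ 0) (hc : 0 ≤ c) (hF : 0 ≤ F * s) :
    (ω * s + lam * c * s - F) * s ≤ ω * s ^ 2 := by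
  nlinarith [mul_nonpos_of_nonpos_of_nonneg (mul_nonpos_of_nonpos_of_nonneg hlam hc) (sq_nonneg s)]

section Energy

variable {N : ℕ} {m : ℝ} {v : EuclideanSpace ℝ (Fin (N+1)) → ℝ}

theorem mul_integral_trace_sq_le (hm : 0 < m) (hv : H1 N v) :
    Integrable (fun x => v (emb N x) ^ 2) ∧
      m * ∫ x, v (emb N x) ^ 2 ≤ ∫ X in upper N, (‖fderiv ℝ v X‖ ^ 2 + m ^ 2 * v X ^ 2) := by
  obtain ⟨hdiff, hv2, hDv2⟩ := hv
  have hd2 : IntegrableOn (fun X => normalDeriv N v X ^ 2) (upper N) :=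
    hDv2.integrable_sq.mono' (measurable_normalDeriv.pow_const 2).aestronglyMeasurable <|
      Eventually.of_forall fun X => by
        rw [Real.norm_eq_abs, abs_sq]; exact sq_normalDeriv_le X
  obtain ⟨htrace, hle⟩ := integral_trace_sq_le hm hdiff hv2.integrable_sq hd2
  refine ⟨htrace, ?_⟩
  calc m * ∫ x, v (emb N x) ^ 2
      ≤ m * ∫ X in upper N, (m * v X ^ 2 + m⁻¹ * normalDeriv N v X ^ 2) := by gcongr
    _ = ∫ X in upper N, (normalDeriv N v X ^ 2 + m ^ 2 * v X ^ 2) := by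
      rw [← integral_const_mul]
      congr 1 with X
      field_simp
      ring
    _ ≤ ∫ X in upper N, (‖fderiv ℝ v X‖ ^ 2 + m ^ 2 * v X ^ 2) :=
      integral_mono (hd2.add (hv2.integrable_sq.const_mul _))
        (hDv2.integrable_sq.add (hv2.integrable_sq.const_mul _))
        fun X => add_le_add_left (sq_normalDeriv_le X) _

lemma integral_energy_eq_of_isWeakSolution {ω lam : ℝ} {W : EuclideanSpace ℝ (Fin N) → ℝ}
    {Fs : EuclideanSpace ℝ (Fin N) → ℝ → ℝ} (hsol : IsWeakSolution N m ω lam W Fs v)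
    (hv : H1 N v) :
    ∫ X in upper N, (‖fderiv ℝ v X‖ ^ 2 + m ^ 2 * v X ^ 2) =
      ∫ x, (ω * v (emb N x)
          + lam * (∫ y, W (x - y) * v (emb N y) ^ 2) * v (emb N x)
          - Fs x (v (emb N x))) * v (emb N x) := by
  rw [← hsol v hv]
  congr 1 with X
  rw [real_inner_self_eq_norm_sq, gradient, LinearIsometryEquiv.norm_map]
  ring

lemma ae_eq_zero_of_integral_energy_nonpos (hm : 0 < m) (hv : H1 N v)
    (h : ∫ X in upper N, (‖fderiv ℝ v X‖ ^ 2 + m ^ 2 * v X ^ 2) ≤ 0) :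
    ∀ᵐ X ∂(volume.restrict (upper N)), v X = 0 := by
  have hE_nonneg : 0 ≤ fun X => ‖fderiv ℝ v X‖ ^ 2 + m ^ 2 * v X ^ 2 := fun X => by positivity
  have hE_int := hv.2.2.integrable_sq.add (hv.2.1.integrable_sq.const_mul (m ^ 2))
  have hE_zero := (integral_eq_zero_iff_of_nonneg hE_nonneg hE_int).mp
    (le_antisymm h (integral_nonneg hE_nonneg))
  filter_upwards [hE_zero] with X hX
  have := ((add_eq_zero_iff_of_nonneg (sq_nonneg _) (by positivity)).mp hX).2
  simpa [hm.ne'] using this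

lemma integral_energy_nonpos_of_isWeakSolution {ω lam : ℝ} {W : EuclideanSpace ℝ (Fin N) → ℝ}
    {Fs : EuclideanSpace ℝ (Fin N) → ℝ → ℝ} (hm : 0 < m) (hω : ω < m) (hlam : lam ≤ 0)
    (hW : ∀ x, 0 ≤ W x) (hFs : ∀ᵐ x, ∀ s : ℝ, 0 ≤ Fs x s * s) (hv : H1 N v)
    (hsol : IsWeakSolution N m ω lam W Fs v) :
    ∫ X in upper N, (‖fderiv ℝ v X‖ ^ 2 + m ^ 2 * v X ^ 2) ≤ 0 := by
  obtain ⟨htrace, hmtrace⟩ := mul_integral_trace_sq_le hm hv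
  rw [integral_energy_eq_of_isWeakSolution hsol hv] at hmtrace ⊢
  set B : EuclideanSpace ℝ (Fin N) → ℝ := fun x => (ω * v (emb N x)
      + lam * (∫ y, W (x - y) * v (emb N y) ^ 2) * v (emb N x)
      - Fs x (v (emb N x))) * v (emb N x)
  by_cases hB : Integrable B
  · have hle : ∫ x, B x ≤ ω * ∫ x, v (emb N x) ^ 2 := by
      rw [← integral_const_mul]
      refine integral_mono_ae hB (htrace.const_mul ω) ?_
      filter_upwards [hFs] with x hx
      exact boundary_integrand_le hlam
        (integral_nonneg fun y => mul_nonneg (hW _) (sq_nonneg _)) (hx _)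
    have htrace_zero : ∫ x, v (emb N x) ^ 2 = 0 :=
      le_antisymm (nonpos_of_mul_nonpos_right (by linarith) (sub_pos.mpr hω))
        (integral_nonneg fun x => sq_nonneg _)
    rwa [htrace_zero, mul_zero] at hle
  · rw [integral_undef hB]

end Energy

theorem stmt_9_general (N : ℕ) (m ω lam : ℝ) (hm : 0 < m) (hω : ω < m) (hlam : lam ≤ 0)
    (W : EuclideanSpace ℝ (Fin N) → ℝ) (hW : ∀ x, 0 ≤ W x)
    (Fs : EuclideanSpace ℝ (Fin N) → ℝ → ℝ)
    (hFs : ∀ᵐ x : EuclideanSpace ℝ (Fin N), ∀ s : ℝ, 0 ≤ Fs x s * s)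
    (v : EuclideanSpace ℝ (Fin (N+1)) → ℝ) (hv : H1 N v)
    (hsol : IsWeakSolution N m ω lam W Fs v) :
    ∀ᵐ X ∂(volume.restrict (upper N)), v X = 0 :=
  ae_eq_zero_of_integral_energy_nonpos hm hv <|
    integral_energy_nonpos_of_isWeakSolution hm hω hlam hW hFs hv hsol

/-- non-existence for `λ ≤ 0`: if `F_s(x,s)s ≥ 0` a.e., `W ≥ 0`, `λ ≤ 0`
and `ω < m`, then any weak solution `v ∈ H¹(ℝ^{N+1}_+)` of the extension system vanishes. -/
theorem stmt_9 (N : ℕ) (hN : 2 ≤ N) (m ω lam : ℝ) (hm : 0 < m) (hω : ω < m) (hlam : lam ≤ 0)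
    (W : EuclideanSpace ℝ (Fin N) → ℝ) (hW : ∀ x, 0 ≤ W x)
    (Fs : EuclideanSpace ℝ (Fin N) → ℝ → ℝ)
    (hFs : ∀ᵐ x : EuclideanSpace ℝ (Fin N), ∀ s : ℝ, 0 ≤ Fs x s * s)
    (v : EuclideanSpace ℝ (Fin (N+1)) → ℝ) (hv : H1 N v)
    (hsol : IsWeakSolution N m ω lam W Fs v) :
    ∀ᵐ X ∂(volume.restrict (upper N)), v X = 0 :=
  stmt_9_general N m ω lam hm hω hlam W hW Fs hFs v hv hsol
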